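/- arXiv:1810.08409 — 2 statements merged into one kernel-verified Lean document; each statement's English description precedes it below -/
import Mathlib

section
/- Let a, b > 0, T > 0, g : [0,T] → [0,∞) be continuous, and f : [0,T] → [0,∞) be absolutely continuous with 0 < f(0) ≤ (a/b)² and f'(t) ≤ -g(t)(a - b√(f(t))) for almost every t ∈ (0,T). Then f(t) ≤ (a/b)² for all t ∈ [0,T]. -/
open MeasureTheory Set Filter Topology

/-- Nonlinear Gronwall-type inequality (Lemma A.3): if `f` is absolutely
continuous (given by the FTC representation with a.e. derivative `f'`),
`g ≥ 0` is continuous, `f' ≤ -g (a - b √f)` a.e., and `0 < f 0 ≤ (a/b)²`,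
then `f t ≤ (a/b)²` on `[0, T]`. -/
theorem nonlinear_gronwall_sqrt
    (T a b : ℝ) (ha : 0 < a) (hb : 0 < b) (hT : 0 < T)
    (f f' g : ℝ → ℝ)
    (hg_cont : ContinuousOn g (Icc 0 T))
    (hg_nonneg : ∀ t ∈ Icc 0 T, 0 ≤ g t)
    (hf_nonneg : ∀ t ∈ Icc 0 T, 0 ≤ f t)
    (hf'_int : IntegrableOn f' (Icc 0 T))
    (hFTC : ∀ t ∈ Icc 0 T, f t = f 0 + ∫ s in (0:ℝ)..t, f' s)
    (hderiv : ∀ᵐ t ∂(volume : Measure ℝ), t ∈ Ioo 0 T → HasDerivAt f (f' t) t)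
    (hineq : ∀ᵐ t ∂(volume : Measure ℝ), t ∈ Ioo 0 T →
      f' t ≤ -g t * (a - b * Real.sqrt (f t)))
    (hf0_pos : 0 < f 0) (hf0 : f 0 ≤ (a / b) ^ 2) :
    ∀ t ∈ Icc 0 T, f t ≤ (a / b) ^ 2 := by
  set K : ℝ := (a / b) ^ 2 with hKdef
  have hab : 0 < a / b := div_pos ha hb
  -- continuity of f
  have hf_cont : ContinuousOn f (Icc 0 T) := by
    have h1 : ContinuousOn (fun x => f 0 + ∫ s in (0:ℝ)..x, f' s) (Icc 0 T) := by
      apply continuousOn_const.add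
      have := intervalIntegral.continuousOn_primitive_interval
        (μ := volume) (a := (0:ℝ)) (b := T) (f := f')
        (by simpa [uIcc_of_le hT.le] using hf'_int)
      simpa [uIcc_of_le hT.le] using this
    exact h1.congr (fun x hx => hFTC x hx)
  -- max of g
  obtain ⟨tM, htM, hM'⟩ := isCompact_Icc.exists_isMaxOn (nonempty_Icc.2 hT.le) hg_cont
  have hM : ∀ y ∈ Icc (0:ℝ) T, g y ≤ g tM := hM'
  set M : ℝ := g tM with hMdef
  have hM0 : 0 ≤ M := hg_nonneg tM htM
  set C : ℝ := M * b ^ 2 / a with hCdef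
  have hC0 : 0 ≤ C := div_nonneg (mul_nonneg hM0 (sq_nonneg b)) ha.le
  -- key pointwise estimate
  have key : ∀ τ ∈ Icc 0 T, K ≤ f τ → g τ * (b * Real.sqrt (f τ) - a) ≤ C * (f τ - K) := by
    intro τ hτ hfτ
    set r : ℝ := Real.sqrt (f τ) with hrdef
    have hr0 : 0 ≤ r := Real.sqrt_nonneg _
    have hr : a / b ≤ r := by
      have h := Real.sqrt_le_sqrt hfτ
      rwa [hKdef, Real.sqrt_sq hab.le] at h
    have hbr : a ≤ b * r := (div_le_iff₀' hb).mp hr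
    have hfr : f τ = r ^ 2 := (Real.sq_sqrt (hf_nonneg τ hτ)).symm
    have hbK : b ^ 2 * K = a ^ 2 := by
      rw [hKdef]; field_simp
    have h2 : b * r - a ≤ b ^ 2 / a * (f τ - K) := by
      rw [hfr, div_mul_eq_mul_div, le_div_iff₀ ha]
      nlinarith [mul_nonneg (mul_nonneg hb.le hr0) (sub_nonneg.2 hbr)]
    calc g τ * (b * r - a) ≤ g τ * (b ^ 2 / a * (f τ - K)) :=
          mul_le_mul_of_nonneg_left h2 (hg_nonneg τ hτ)
      _ ≤ M * (b ^ 2 / a * (f τ - K)) := by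
          apply mul_le_mul_of_nonneg_right (hM τ hτ)
          have : 0 ≤ f τ - K := sub_nonneg.2 hfτ
          positivity
      _ = C * (f τ - K) := by rw [hCdef]; ring
  -- by contradiction
  by_contra hcon
  push_neg at hcon
  obtain ⟨t₁, ht₁, hft₁⟩ := hcon
  -- the set S and its sup
  set S : Set ℝ := {x | x ∈ Icc 0 t₁ ∧ f x ≤ K} with hSdef
  have hS0 : (0:ℝ) ∈ S := ⟨left_mem_Icc.2 ht₁.1, hf0⟩
  have hSbdd : BddAbove S := ⟨t₁, fun x hx => hx.1.2⟩
  have hSclosed : IsClosed S := by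
    have hEq : S = Icc 0 t₁ ∩ f ⁻¹' Iic K := by
      ext x; simp [hSdef, Set.mem_sep_iff, and_comm]
    rw [hEq]
    exact (hf_cont.mono (Icc_subset_Icc_right ht₁.2)).preimage_isClosed_of_isClosed
      isClosed_Icc isClosed_Iic
  set s : ℝ := sSup S with hsdef
  have hsS : s ∈ S := hSclosed.csSup_mem ⟨0, hS0⟩ hSbdd
  have hs0 : 0 ≤ s := hsS.1.1
  have hst₁le : s ≤ t₁ := hsS.1.2
  have hfs : f s ≤ K := hsS.2
  have hst₁ : s < t₁ := lt_of_le_of_ne hst₁le (by intro h; rw [h] at hfs; exact absurd hfs (not_le.2 hft₁))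
  have hsT : s < T := lt_of_lt_of_le hst₁ ht₁.2
  have hsub : Icc s t₁ ⊆ Icc 0 T := Icc_subset_Icc hs0 ht₁.2
  have hgt : ∀ x ∈ Ioc s t₁, K < f x := by
    intro x hx
    by_contra h
    push_neg at h
    have hxS : x ∈ S := ⟨⟨le_trans hs0 hx.1.le, hx.2⟩, h⟩
    exact absurd (le_csSup hSbdd hxS) (not_le.2 hx.1)
  have hfsK : f s = K := by
    refine le_antisymm hfs ?_
    have htend : Tendsto f (𝓝[>] s) (𝓝 (f s)) := by
      have h1 : Tendsto f (𝓝[Icc 0 T] s) (𝓝 (f s)) :=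
        hf_cont.continuousWithinAt ⟨hs0, hsT.le⟩
      refine h1.mono_left (nhdsWithin_le_iff.2 ?_)
      have hIoo : Ioo s T ∈ 𝓝[>] s := Ioo_mem_nhdsGT_of_mem ⟨le_refl s, hsT⟩
      exact mem_of_superset hIoo (fun x hx => ⟨le_trans hs0 hx.1.le, hx.2.le⟩)
    have hev : ∀ᶠ x in 𝓝[>] s, K ≤ f x := by
      have hIoo : Ioo s t₁ ∈ 𝓝[>] s := Ioo_mem_nhdsGT_of_mem ⟨le_refl s, hst₁⟩
      exact mem_of_superset hIoo (fun x hx => (hgt x ⟨hx.1, hx.2.le⟩).le)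
    exact ge_of_tendsto htend hev
  have hfK : ∀ τ ∈ Icc s t₁, K ≤ f τ := by
    intro τ hτ
    rcases eq_or_lt_of_le hτ.1 with h | h
    · rw [← h, hfsK]
    · exact (hgt τ ⟨h, hτ.2⟩).le
  -- clamped function w = f - K on [s, t₁]
  set w : ℝ → ℝ := fun x => f (max s (min x t₁)) - K with hwdef
  have hclamp_mem : ∀ x : ℝ, max s (min x t₁) ∈ Icc 0 T := by
    intro x
    constructor
    · exact le_trans hs0 (le_max_left _ _)
    · exact max_le hsT.le (le_trans (min_le_right _ _) ht₁.2)
  have hw_cont : Continuous w := by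
    have hclamp : Continuous fun x : ℝ => max s (min x t₁) :=
      continuous_const.max (continuous_id.min continuous_const)
    exact (hf_cont.comp_continuous hclamp hclamp_mem).sub continuous_const
  have hw_eq : ∀ x ∈ Icc s t₁, w x = f x - K := by
    intro x hx
    simp only [hwdef, min_eq_left hx.2, max_eq_right hx.1]
  have hw_nonneg : ∀ x ∈ Icc s t₁, 0 ≤ w x := by
    intro x hx
    rw [hw_eq x hx]
    exact sub_nonneg.2 (hfK x hx)
  -- the primitive U
  set U : ℝ → ℝ := fun x => ∫ τ in s..x, w τ with hUdef
  have hU_deriv : ∀ x : ℝ, HasDerivAt U (w x) x := by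
    intro x
    exact intervalIntegral.integral_hasDerivAt_right (hw_cont.intervalIntegrable _ _)
      (hw_cont.stronglyMeasurable.stronglyMeasurableAtFilter)
      hw_cont.continuousAt
  -- key integral inequality: w x ≤ C * U x on [s, t₁]
  have hkey : ∀ x ∈ Icc s t₁, w x ≤ C * U x := by
    intro x hx
    have hx0T : x ∈ Icc 0 T := hsub hx
    have hint1 : IntervalIntegrable f' volume s x :=
      (hf'_int.mono_set (by rw [uIcc_of_le hx.1]; exact Icc_subset_Icc hs0 hx0T.2)).intervalIntegrable
    have hint2 : IntervalIntegrable (fun τ => C * w τ) volume s x :=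
      ((hw_cont.const_smul C).intervalIntegrable _ _)
    have hnull : ∀ᵐ τ ∂(volume : Measure ℝ), τ ∉ ({0, T} : Set ℝ) := by
      have h := (Set.toFinite ({0, T} : Set ℝ)).measure_zero (volume : Measure ℝ)
      exact compl_mem_ae_iff.2 h
    have hae : f' ≤ᵐ[(volume : Measure ℝ).restrict (Icc s x)] fun τ => C * w τ := by
      filter_upwards [ae_restrict_of_ae hineq, ae_restrict_of_ae hnull,
        ae_restrict_mem measurableSet_Icc] with τ h1 h2 h3
      have hτst : τ ∈ Icc s t₁ := ⟨h3.1, le_trans h3.2 hx.2⟩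
      have hτ0T : τ ∈ Icc 0 T := hsub hτst
      have hτIoo : τ ∈ Ioo 0 T := by
        constructor
        · rcases lt_or_eq_of_le hτ0T.1 with h | h
          · exact h
          · exact absurd (by simp [← h]) h2
        · rcases lt_or_eq_of_le hτ0T.2 with h | h
          · exact h
          · exact absurd (by simp [h]) h2
      have hKf : K ≤ f τ := hfK τ hτst
      calc f' τ ≤ -g τ * (a - b * Real.sqrt (f τ)) := h1 hτIoo
        _ = g τ * (b * Real.sqrt (f τ) - a) := by ring
        _ ≤ C * (f τ - K) := key τ hτ0T hKf
        _ = C * w τ := by rw [hw_eq τ hτst]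
    have h1 : f x - K = ∫ τ in s..x, f' τ := by
      have hint0s : IntervalIntegrable f' volume 0 s :=
        (hf'_int.mono_set (by rw [uIcc_of_le hs0]; exact Icc_subset_Icc le_rfl hsT.le)).intervalIntegrable
      have hadd := intervalIntegral.integral_add_adjacent_intervals hint0s hint1
      have hfx := hFTC x hx0T
      have hfs' := hFTC s ⟨hs0, hsT.le⟩
      rw [← hfsK]
      rw [hfx, hfs', ← hadd]
      ring
    have h2 : (∫ τ in s..x, f' τ) ≤ ∫ τ in s..x, C * w τ :=
      intervalIntegral.integral_mono_ae_restrict hx.1 hint1 hint2 hae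
    have h3 : (∫ τ in s..x, C * w τ) = C * U x := by
      rw [hUdef]
      exact intervalIntegral.integral_const_mul C w
    rw [hw_eq x hx]
    calc f x - K = ∫ τ in s..x, f' τ := h1
      _ ≤ ∫ τ in s..x, C * w τ := h2
      _ = C * U x := h3
  -- Gronwall
  have hbound : ∀ x ∈ Ico s t₁, ‖w x‖ ≤ C * ‖U x‖ + 0 := by
    intro x hx
    have hx' : x ∈ Icc s t₁ := Ico_subset_Icc_self hx
    have hU0 : 0 ≤ U x := by
      rw [hUdef]
      apply intervalIntegral.integral_nonneg hx'.1
      intro τ hτ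
      exact hw_nonneg τ ⟨hτ.1, le_trans hτ.2 hx'.2⟩
    rw [Real.norm_of_nonneg (hw_nonneg x hx'), Real.norm_of_nonneg hU0, add_zero]
    exact hkey x hx'
  have hgron := norm_le_gronwallBound_of_norm_deriv_right_le (f := U) (f' := w)
    (δ := 0) (K := C) (ε := 0) (a := s) (b := t₁)
    (fun x _ => (hU_deriv x).continuousAt.continuousWithinAt)
    (fun x _ => (hU_deriv x).hasDerivWithinAt)
    (by simp [hUdef]) hbound
  have hUt₁ := hgron t₁ (right_mem_Icc.2 hst₁.le)
  rw [gronwallBound_ε0_δ0] at hUt₁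
  have hU0 : U t₁ = 0 := norm_le_zero_iff.1 hUt₁
  have h1 := hkey t₁ (right_mem_Icc.2 hst₁.le)
  rw [hU0, mul_zero, hw_eq t₁ (right_mem_Icc.2 hst₁.le)] at h1
  linarith [hft₁]
end

section
/- Let a, b > 0 and f : [0,T] → [0,∞) be absolutely continuous with f(0) < (a/b)², and let g : [0,T] → [0,∞) be continuous, with f'(t) ≤ -g(t)(a - b√(f(t))) for a.e. t. Then f(t) < (a/b)² for all t ∈ [0,T], i.e., the strict bound is preserved. -/
open MeasureTheory Set

/-- Strict version of the nonlinear Gronwall lemma: if the initial value is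
strictly below the threshold `(a/b)²`, then `f` stays strictly below it. -/
theorem nonlinear_gronwall_sqrt_strict
    (T a b : ℝ) (ha : 0 < a) (hb : 0 < b) (hT : 0 < T)
    (f f' g : ℝ → ℝ)
    (hg_cont : ContinuousOn g (Icc 0 T))
    (hg_nonneg : ∀ t ∈ Icc 0 T, 0 ≤ g t)
    (hf_nonneg : ∀ t ∈ Icc 0 T, 0 ≤ f t)
    (hf'_int : IntegrableOn f' (Icc 0 T))
    (hFTC : ∀ t ∈ Icc 0 T, f t = f 0 + ∫ s in (0:ℝ)..t, f' s)
    (hderiv : ∀ᵐ t ∂(volume : Measure ℝ), t ∈ Ioo 0 T → HasDerivAt f (f' t) t)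
    (hineq : ∀ᵐ t ∂(volume : Measure ℝ), t ∈ Ioo 0 T →
      f' t ≤ -g t * (a - b * Real.sqrt (f t)))
    (hf0 : f 0 < (a / b) ^ 2) :
    ∀ t ∈ Icc 0 T, f t < (a / b) ^ 2 := by
  -- continuity of f on [0,T]
  have hTle : (0:ℝ) ≤ T := hT.le
  have hf_cont : ContinuousOn f (Icc 0 T) := by
    have h1 : ContinuousOn (fun t => f 0 + ∫ s in (0:ℝ)..t, f' s) (Icc 0 T) := by
      apply ContinuousOn.add continuousOn_const
      have := intervalIntegral.continuousOn_primitive_interval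
        (μ := volume) (f := f') (a := (0:ℝ)) (b := T)
        (by rwa [uIcc_of_le hTle])
      rwa [uIcc_of_le hTle] at this
    exact h1.congr fun t ht => hFTC t ht
  by_contra hcon
  push_neg at hcon
  obtain ⟨t₁, ht₁, ht₁f⟩ := hcon
  set S : Set ℝ := {t ∈ Icc 0 T | (a / b) ^ 2 ≤ f t} with hS
  have hSne : S.Nonempty := ⟨t₁, ht₁, ht₁f⟩
  have hSclosed : IsClosed S := by
    have : S = Icc 0 T ∩ f ⁻¹' (Ici ((a / b) ^ 2)) := by
      ext t; simp [hS, and_comm]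
    rw [this]
    exact hf_cont.preimage_isClosed_of_isClosed isClosed_Icc isClosed_Ici
  have hSbdd : BddBelow S := ⟨0, fun t ht => ht.1.1⟩
  set t₀ := sInf S with ht₀def
  have ht₀S : t₀ ∈ S := hSclosed.csInf_mem hSne hSbdd
  have ht₀Icc : t₀ ∈ Icc 0 T := ht₀S.1
  have ht₀pos : 0 < t₀ := by
    rcases lt_or_eq_of_le ht₀Icc.1 with h | h
    · exact h
    · exfalso; rw [← h] at ht₀S; exact absurd ht₀S.2 (not_le.mpr hf0)
  -- on (0, t₀), f' ≤ 0 a.e.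
  have hlt : ∀ t ∈ Ioo 0 t₀, f t < (a / b) ^ 2 := by
    intro t ht
    by_contra h
    push_neg at h
    have : t ∈ S := ⟨⟨ht.1.le, ht.2.le.trans ht₀Icc.2⟩, h⟩
    exact absurd (csInf_le hSbdd this) (not_le.mpr ht.2)
  have hae : ∀ᵐ t ∂(volume : Measure ℝ), t ∈ Ioc 0 t₀ → f' t ≤ 0 := by
    have hne : ∀ᵐ t ∂(volume : Measure ℝ), t ∉ ({t₀} : Set ℝ) :=
      measure_eq_zero_iff_ae_notMem.mp (measure_singleton t₀)
    filter_upwards [hineq, hne] with t h h' ht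
    have ht' : t ∈ Ioo 0 t₀ := ⟨ht.1, lt_of_le_of_ne ht.2 (by simpa using h')⟩
    have htT : t ∈ Ioo 0 T := ⟨ht'.1, ht'.2.trans_le ht₀Icc.2⟩
    have hfl := hlt t ht'
    have hsq : Real.sqrt (f t) < a / b := (Real.sqrt_lt' (div_pos ha hb)).mpr hfl
    have hpos : 0 < a - b * Real.sqrt (f t) := by
      have h2 := (lt_div_iff₀ hb).mp hsq
      nlinarith
    have hgt : 0 ≤ g t := hg_nonneg t ⟨htT.1.le, htT.2.le⟩
    have := h htT
    nlinarith
  have hint : (∫ s in (0:ℝ)..t₀, f' s) ≤ 0 := by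
    rw [intervalIntegral.integral_of_le ht₀pos.le]
    exact integral_nonpos_of_ae ((ae_restrict_iff' measurableSet_Ioc).mpr hae)
  have := hFTC t₀ ht₀Icc
  have := ht₀S.2
  linarith
end
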